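/- arXiv:2202.04921 — 9 statements merged into one kernel-verified Lean document; each statement's English description precedes it below -/
import Mathlib

section
/- For each m ∈ {2, 3, 4}, the m-bipartite Ramsey number BR_m(K_{2,2}, K_{4,4}) does not exist; that is, for every positive integer n there exists a subgraph G of the complete bipartite graph K_{m,n} such that G contains no K_{2,2} and the bipartite complement of G contains no K_{4,4}. -/
/-- `G` (an edge set of a subgraph of `K_{m,n}`) contains `K_{s,t}`:
there are an `s`-subset `A` of the `X`-side and a `t`-subset `B` of the `Y`-side
with every pair in `A × B` an edge. -/
def ContainsK (m n s t : ℕ) (G : Finset (Fin m × Fin n)) : Prop :=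
  ∃ A : Finset (Fin m), ∃ B : Finset (Fin n),
    A.card = s ∧ B.card = t ∧ ∀ x ∈ A, ∀ y ∈ B, (x, y) ∈ G

/-- The bipartite complement of a subgraph of `K_{m,n}`. -/
def bipCompl (m n : ℕ) (G : Finset (Fin m × Fin n)) : Finset (Fin m × Fin n) :=
  Finset.univ \ G

/-- The neighborhood in `Y` of a vertex `x` of the `X`-side. -/
def nbhd (m n : ℕ) (G : Finset (Fin m × Fin n)) (x : Fin m) : Finset (Fin n) :=
  Finset.univ.filter (fun y => (x, y) ∈ G)

/-- The degree of a vertex `x` of the `X`-side. -/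
def degX (m n : ℕ) (G : Finset (Fin m × Fin n)) (x : Fin m) : ℕ :=
  (nbhd m n G x).card


lemma br_key (m n : ℕ) (hm : 0 < m) (hm4 : m ≤ 4) :
    ∃ G : Finset (Fin m × Fin n),
      ¬ ContainsK m n 2 2 G ∧ ¬ ContainsK m n 4 4 (bipCompl m n G) := by
  refine ⟨Finset.univ.filter (fun p => (p.2 : ℕ) % m = (p.1 : ℕ)), ?_, ?_⟩
  · rintro ⟨A, B, hA, hB, h⟩
    obtain ⟨x1, hx1, x2, hx2, hne⟩ := Finset.one_lt_card.1 (by omega : 1 < A.card)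
    obtain ⟨y, hy⟩ := Finset.card_pos.1 (by omega : 0 < B.card)
    have h1 := h x1 hx1 y hy
    have h2 := h x2 hx2 y hy
    simp only [Finset.mem_filter] at h1 h2
    exact hne (Fin.ext (h1.2.symm.trans h2.2))
  · rintro ⟨A, B, hA, hB, h⟩
    have hle : A.card ≤ m := by
      simpa using Finset.card_le_card (Finset.subset_univ A)
    have hm4' : m = 4 := by omega
    have hAuniv : A = Finset.univ :=
      Finset.eq_univ_of_card A (by simp [hA, hm4'])
    obtain ⟨y, hy⟩ := Finset.card_pos.1 (by omega : 0 < B.card)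
    have hx := h ⟨(y : ℕ) % m, Nat.mod_lt _ hm⟩ (hAuniv ▸ Finset.mem_univ _) y hy
    simp [bipCompl] at hx

/-- For each m ∈ {2,3,4}, BR_m(K_{2,2}, K_{4,4}) does not exist: for every positive
integer n there is a subgraph G of K_{m,n} with no K_{2,2} whose bipartite complement
has no K_{4,4}. -/
theorem br_m_not_exist_234 :
    ∀ m ∈ ({2, 3, 4} : Set ℕ), ∀ n : ℕ, 0 < n →
      ∃ G : Finset (Fin m × Fin n),
        ¬ ContainsK m n 2 2 G ∧ ¬ ContainsK m n 4 4 (bipCompl m n G) := by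
  intro m hm n _
  simp only [Set.mem_insert_iff, Set.mem_singleton_iff] at hm
  exact br_key m n (by omega) (by omega)
end

section
/- There exists a subgraph G of the complete bipartite graph K_{5,25} such that G contains no K_{2,2} and the bipartite complement of G contains no K_{4,4}. -/
/-- pairs of elements of Fin 5, indexed 0..9 -/
def myPairs : Fin 10 → ℕ × ℕ
  | 0 => (0,1) | 1 => (0,2) | 2 => (0,3) | 3 => (0,4) | 4 => (1,2)
  | 5 => (1,3) | 6 => (1,4) | 7 => (2,3) | 8 => (2,4) | 9 => (3,4)

/-- adjacency for our construction -/
def adjB (x : Fin 5) (y : Fin 25) : Bool :=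
  if h : y.val < 10 then
    let p := myPairs ⟨y.val, h⟩
    x.val == p.1 || x.val == p.2
  else
    (y.val - 10) % 5 == x.val

lemma no22 : ∀ x1 x2 : Fin 5, ∀ y1 y2 : Fin 25, x1 ≠ x2 → y1 ≠ y2 →
    ¬(adjB x1 y1 ∧ adjB x1 y2 ∧ adjB x2 y1 ∧ adjB x2 y2) := by decide

lemma key : ∀ x0 : Fin 5,
    (Finset.univ.filter (fun y : Fin 25 => ∀ x : Fin 5, adjB x y → x = x0)).card ≤ 3 := by
  decide

/-- There is a subgraph of K_{5,25} with no K_{2,2} whose bipartite complement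
has no K_{4,4}. -/
theorem good_coloring_5_25 :
    ∃ G : Finset (Fin 5 × Fin 25),
      ¬ ContainsK 5 25 2 2 G ∧ ¬ ContainsK 5 25 4 4 (bipCompl 5 25 G) := by
  refine ⟨Finset.univ.filter (fun e => adjB e.1 e.2), ?_, ?_⟩
  · rintro ⟨A, B, hA, hB, hE⟩
    obtain ⟨x1, x2, hx, rfl⟩ := Finset.card_eq_two.mp hA
    obtain ⟨y1, y2, hy, rfl⟩ := Finset.card_eq_two.mp hB
    have h := fun x hx y hy => (Finset.mem_filter.mp (hE x hx y hy)).2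
    exact no22 x1 x2 y1 y2 hx hy
      ⟨h x1 (by simp) y1 (by simp), h x1 (by simp) y2 (by simp),
       h x2 (by simp) y1 (by simp), h x2 (by simp) y2 (by simp)⟩
  · rintro ⟨A, B, hA, hB, hE⟩
    have hAc : Aᶜ.card = 1 := by
      have := Finset.card_compl A
      simp [hA] at this; omega
    obtain ⟨x0, hx0⟩ := Finset.card_eq_one.mp hAc
    have hBsub : B ⊆ Finset.univ.filter (fun y : Fin 25 => ∀ x : Fin 5, adjB x y → x = x0) := by
      intro y hy
      simp only [Finset.mem_filter, Finset.mem_univ, true_and]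
      intro x hxadj
      by_contra hne
      have hxA : x ∈ A := by
        by_contra hxA
        have : x ∈ Aᶜ := Finset.mem_compl.mpr hxA
        rw [hx0] at this
        exact hne (Finset.mem_singleton.mp this)
      have := hE x hxA y hy
      simp only [bipCompl, Finset.mem_sdiff, Finset.mem_univ, true_and,
        Finset.mem_filter] at this
      exact this hxadj
    have := Finset.card_le_card hBsub
    rw [hB] at this
    exact absurd (this.trans (key x0)) (by norm_num)
end

section
/- 22 is the least positive integer n such that every subgraph G of the complete bipartite graph K_{6,n} contains K_{2,2} or the bipartite complement of G contains K_{4,4}; that is, BR_6(K_{2,2}, K_{4,4}) = 22. -/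
/-! ### Auxiliary material for the lower bound: an explicit extremal graph -/

/-- Adjacency for the extremal subgraph of `K_{6,21}`:
columns `0..14` are the 15 pairs of rows, columns `15..20` are the 6 singletons. -/
def padj (a b : ℕ) : Bool :=
  if b < 5 then a == 0 || a == b + 1
  else if b < 9 then a == 1 || a == b - 3
  else if b < 12 then a == 2 || a == b - 6
  else if b < 14 then a == 3 || a == b - 8
  else if b < 15 then a == 4 || a == 5
  else a == b - 15

/-- The extremal graph restricted to `n` columns. -/
def exG (n : ℕ) : Finset (Fin 6 × Fin n) :=
  Finset.univ.filter fun p => padj p.1.val p.2.val = true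

theorem factA : ∀ x1 x2 : Fin 6, ∀ y1 y2 : Fin 21, x1 ≠ x2 → y1 ≠ y2 →
    ¬(padj x1.val y1.val = true ∧ padj x1.val y2.val = true ∧
      padj x2.val y1.val = true ∧ padj x2.val y2.val = true) := by decide

theorem factB : ∀ A : Finset (Fin 6), A.card = 4 →
    (Finset.univ.filter fun y : Fin 21 => ∀ x ∈ A, padj x.val y.val = false).card ≤ 3 := by
  decide

theorem exG_no22 {n : ℕ} (hn : n ≤ 21) : ¬ ContainsK 6 n 2 2 (exG n) := by
  rintro ⟨A, B, hA, hB, hE⟩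
  obtain ⟨x1, x2, hx, rfl⟩ := Finset.card_eq_two.1 hA
  obtain ⟨y1, y2, hy, rfl⟩ := Finset.card_eq_two.1 hB
  have hmem : ∀ x ∈ ({x1, x2} : Finset (Fin 6)), ∀ y ∈ ({y1, y2} : Finset (Fin n)),
      padj x.val y.val = true := by
    intro x hxm y hym
    have := hE x hxm y hym
    simpa [exG] using this
  have hy1 : (y1 : ℕ) < 21 := lt_of_lt_of_le y1.isLt hn
  have hy2 : (y2 : ℕ) < 21 := lt_of_lt_of_le y2.isLt hn
  refine factA x1 x2 ⟨y1.val, hy1⟩ ⟨y2.val, hy2⟩ hx ?_ ?_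
  · intro h
    apply hy
    have h' := congrArg Fin.val h
    exact Fin.ext h'
  · exact ⟨hmem x1 (by simp) y1 (by simp), hmem x1 (by simp) y2 (by simp),
      hmem x2 (by simp) y1 (by simp), hmem x2 (by simp) y2 (by simp)⟩

theorem exG_no44 {n : ℕ} (hn : n ≤ 21) : ¬ ContainsK 6 n 4 4 (bipCompl 6 n (exG n)) := by
  rintro ⟨A, B, hA, hB, hE⟩
  have hEf : ∀ x ∈ A, ∀ y ∈ B, padj x.val y.val = false := by
    intro x hx y hy
    have := hE x hx y hy
    simp only [bipCompl, Finset.mem_sdiff, Finset.mem_univ, true_and, exG,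
      Finset.mem_filter] at this
    simpa using this
  -- map B into Fin 21
  let f : Fin n → Fin 21 := fun y => ⟨y.val, lt_of_lt_of_le y.isLt hn⟩
  have hinj : Function.Injective f := by
    intro a b h
    have h' := congrArg Fin.val h
    exact Fin.ext h'
  have himg : B.image f ⊆ Finset.univ.filter fun y : Fin 21 => ∀ x ∈ A, padj x.val y.val = false := by
    intro y' hy'
    obtain ⟨y, hy, rfl⟩ := Finset.mem_image.1 hy'
    refine Finset.mem_filter.2 ⟨Finset.mem_univ _, ?_⟩
    intro x hx
    exact hEf x hx y hy
  have hcard : (B.image f).card = 4 := by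
    rw [Finset.card_image_of_injective _ hinj, hB]
  have := Finset.card_le_card himg
  rw [hcard] at this
  have := le_trans this (factB A hA)
  omega

/-! ### The upper bound -/

theorem upper (G : Finset (Fin 6 × Fin 22)) :
    ContainsK 6 22 2 2 G ∨ ContainsK 6 22 4 4 (bipCompl 6 22 G) := by
  by_contra hc
  push_neg at hc
  obtain ⟨h2, h4⟩ := hc
  -- column neighborhoods
  set S : Fin 22 → Finset (Fin 6) := fun y => Finset.univ.filter (fun x => (x, y) ∈ G) with hS
  set P2 : Finset (Finset (Fin 6)) := Finset.univ.powersetCard 2 with hP2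
  have hP2mem : ∀ p : Finset (Fin 6), p ∈ P2 ↔ p.card = 2 := by
    intro p
    simp [hP2, Finset.mem_powersetCard]
  have hP2card : P2.card = 15 := by decide
  -- K1: each pair of rows is contained in at most one column neighborhood
  have hK1 : ∀ p ∈ P2, (Finset.univ.filter fun y : Fin 22 => p ⊆ S y).card ≤ 1 := by
    intro p hp
    by_contra hgt
    push_neg at hgt
    obtain ⟨y1, hy1, y2, hy2, hne⟩ := Finset.one_lt_card.1 hgt
    apply h2
    refine ⟨p, {y1, y2}, (hP2mem p).1 hp, Finset.card_pair hne, ?_⟩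
    intro x hx y hy
    have hsub : ∀ z ∈ ({y1, y2} : Finset (Fin 22)), p ⊆ S z := by
      intro z hz
      rcases Finset.mem_insert.1 hz with h | h
      · subst h; exact (Finset.mem_filter.1 hy1).2
      · rw [Finset.mem_singleton.1 h]; exact (Finset.mem_filter.1 hy2).2
    have := hsub y hy hx
    exact (Finset.mem_filter.1 this).2
  -- K2: for each 2-set T of rows, at most 3 columns have neighborhood inside T
  have hK2 : ∀ T ∈ P2, (Finset.univ.filter fun y : Fin 22 => S y ⊆ T).card ≤ 3 := by
    intro T hT
    by_contra hgt
    push_neg at hgt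
    obtain ⟨B, hBsub, hBcard⟩ := Finset.exists_subset_card_eq hgt
    apply h4
    refine ⟨Tᶜ, B, ?_, hBcard, ?_⟩
    · rw [Finset.card_compl, (hP2mem T).1 hT]
      rfl
    · intro x hx y hy
      simp only [bipCompl, Finset.mem_sdiff, Finset.mem_univ, true_and]
      intro hxy
      have hxS : x ∈ S y := Finset.mem_filter.2 ⟨Finset.mem_univ _, hxy⟩
      have hsub : S y ⊆ T := (Finset.mem_filter.1 (hBsub hy)).2
      exact (Finset.mem_compl.1 hx) (hsub hxS)
  -- per-column inequality
  have hcol : ∀ y : Fin 22,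
      5 ≤ 4 * (P2.filter fun p => p ⊆ S y).card + (P2.filter fun T => S y ⊆ T).card := by
    intro y
    have hpairs : (P2.filter fun p => p ⊆ S y) = (S y).powersetCard 2 := by
      ext p
      simp only [Finset.mem_filter, hP2, Finset.mem_powersetCard]
      constructor
      · rintro ⟨⟨-, h2⟩, hsub⟩; exact ⟨hsub, h2⟩
      · rintro ⟨hsub, h2⟩; exact ⟨⟨Finset.subset_univ _, h2⟩, hsub⟩
    have hpc : (P2.filter fun p => p ⊆ S y).card = (S y).card.choose 2 := by
      rw [hpairs, Finset.card_powersetCard]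
    rcases Nat.lt_or_ge (S y).card 2 with hlt | hge
    · -- card ≤ 1 : at least 5 supersets of size 2
      have hx0 : ∃ x0 : Fin 6, S y ⊆ {x0} := by
        interval_cases h : (S y).card
        · exact ⟨0, by simp [Finset.card_eq_zero.1 h]⟩
        · obtain ⟨a, ha⟩ := Finset.card_eq_one.1 h
          exact ⟨a, by simp [ha]⟩
      obtain ⟨x0, hx0⟩ := hx0
      have hmap : ∀ z ∈ Finset.univ.erase x0,
          insert z {x0} ∈ P2.filter fun T => S y ⊆ T := by
        intro z hz
        have hzx : z ≠ x0 := Finset.ne_of_mem_erase hz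
        refine Finset.mem_filter.2 ⟨(hP2mem _).2 ?_, hx0.trans (Finset.subset_insert _ _)⟩
        rw [Finset.card_insert_of_notMem (by simp [hzx]), Finset.card_singleton]
      have hinj : Set.InjOn (fun z => insert z ({x0} : Finset (Fin 6)))
          (Finset.univ.erase x0) := by
        intro a ha b hb hab
        have hab' : (insert a ({x0} : Finset (Fin 6))) = insert b {x0} := hab
        have haa : a ∈ insert b ({x0} : Finset (Fin 6)) := by
          rw [← hab']; exact Finset.mem_insert_self _ _
        rcases Finset.mem_insert.1 haa with h | h
        · exact h
        · exact absurd (Finset.mem_singleton.1 h) (Finset.ne_of_mem_erase ha)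
      have h5 : 5 ≤ (P2.filter fun T => S y ⊆ T).card := by
        have := Finset.card_le_card_of_injOn _ hmap hinj
        have herase : (Finset.univ.erase x0).card = 5 := by
          rw [Finset.card_erase_of_mem (Finset.mem_univ _)]
          rfl
        omega
      omega
    · rcases Nat.lt_or_ge (S y).card 3 with hlt3 | hge3
      · -- card = 2
        have he2 : (S y).card = 2 := by omega
        have ht1 : 1 ≤ (P2.filter fun T => S y ⊆ T).card := by
          refine Finset.card_pos.2 ⟨S y, Finset.mem_filter.2 ⟨(hP2mem _).2 he2, le_refl _⟩⟩
        have : (P2.filter fun p => p ⊆ S y).card = 1 := by rw [hpc, he2]; rfl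
        omega
      · -- card ≥ 3
        have : 3 ≤ (S y).card.choose 2 := by
          calc 3 = Nat.choose 3 2 := rfl
            _ ≤ (S y).card.choose 2 := Nat.choose_le_choose 2 hge3
        omega
  -- double counting sums
  have hswap1 : ∑ y : Fin 22, (P2.filter fun p => p ⊆ S y).card
      = ∑ p ∈ P2, (Finset.univ.filter fun y : Fin 22 => p ⊆ S y).card := by
    simp only [Finset.card_filter]
    exact Finset.sum_comm
  have hswap2 : ∑ y : Fin 22, (P2.filter fun T => S y ⊆ T).card
      = ∑ T ∈ P2, (Finset.univ.filter fun y : Fin 22 => S y ⊆ T).card := by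
    simp only [Finset.card_filter]
    exact Finset.sum_comm
  have hsum1 : ∑ y : Fin 22, (P2.filter fun p => p ⊆ S y).card ≤ 15 := by
    rw [hswap1]
    calc ∑ p ∈ P2, (Finset.univ.filter fun y : Fin 22 => p ⊆ S y).card
        ≤ ∑ _p ∈ P2, 1 := Finset.sum_le_sum hK1
      _ = 15 := by rw [Finset.sum_const, hP2card]; rfl
  have hsum2 : ∑ y : Fin 22, (P2.filter fun T => S y ⊆ T).card ≤ 45 := by
    rw [hswap2]
    calc ∑ T ∈ P2, (Finset.univ.filter fun y : Fin 22 => S y ⊆ T).card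
        ≤ ∑ _T ∈ P2, 3 := Finset.sum_le_sum hK2
      _ = 45 := by rw [Finset.sum_const, hP2card]; rfl
  have htotal : (110 : ℕ) ≤ 4 * (∑ y : Fin 22, (P2.filter fun p => p ⊆ S y).card)
      + ∑ y : Fin 22, (P2.filter fun T => S y ⊆ T).card := by
    calc (110 : ℕ) = ∑ _y : Fin 22, 5 := by simp
      _ ≤ ∑ y : Fin 22, (4 * (P2.filter fun p => p ⊆ S y).card
            + (P2.filter fun T => S y ⊆ T).card) := Finset.sum_le_sum fun y _ => hcol y
      _ = _ := by rw [Finset.sum_add_distrib, Finset.mul_sum]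
  omega

/-- BR_6(K_{2,2}, K_{4,4}) = 22. -/
theorem br_6_eq_22 :
    IsLeast {n : ℕ | 0 < n ∧ ∀ G : Finset (Fin 6 × Fin n),
      ContainsK 6 n 2 2 G ∨ ContainsK 6 n 4 4 (bipCompl 6 n G)} 22 := by
  constructor
  · exact ⟨by norm_num, fun G => upper G⟩
  · intro n hn
    obtain ⟨hn0, hprop⟩ := hn
    by_contra hlt
    push_neg at hlt
    have hn21 : n ≤ 21 := by omega
    rcases hprop (exG n) with h | h
    · exact exG_no22 hn21 h
    · exact exG_no44 hn21 h
end

section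
/- There exists a subgraph G of the complete bipartite graph K_{7,21} such that G contains no K_{2,2} and the bipartite complement of G contains no K_{4,4} (i.e., K_{7,21} is 2-colorable to (K_{2,2}, K_{4,4})). -/
/-- The 21 unordered pairs from `Fin 7`. -/
def pairList : List (Fin 7 × Fin 7) :=
  [(0,1),(0,2),(0,3),(0,4),(0,5),(0,6),
   (1,2),(1,3),(1,4),(1,5),(1,6),
   (2,3),(2,4),(2,5),(2,6),
   (3,4),(3,5),(3,6),
   (4,5),(4,6),
   (5,6)]

def myEdge (x : Fin 7) (y : Fin 21) : Prop :=
  x = (pairList.getD y.val (0,0)).1 ∨ x = (pairList.getD y.val (0,0)).2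

instance : DecidablePred (fun p : Fin 7 × Fin 21 => myEdge p.1 p.2) := by
  unfold myEdge; infer_instance

def myG : Finset (Fin 7 × Fin 21) :=
  Finset.univ.filter (fun p => myEdge p.1 p.2)

/-- If for every `s`-subset `A` the common neighborhood has fewer than `t`
elements, then `G` contains no `K_{s,t}`. -/
lemma not_containsK_of_card {m n s t : ℕ} {G : Finset (Fin m × Fin n)}
    (h : ∀ A : Finset (Fin m), A.card = s →
      (Finset.univ.filter (fun y => ∀ x ∈ A, (x, y) ∈ G)).card < t) :
    ¬ ContainsK m n s t G := by
  rintro ⟨A, B, hA, hB, hAB⟩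
  have hsub : B ⊆ Finset.univ.filter (fun y => ∀ x ∈ A, (x, y) ∈ G) := by
    intro y hy
    simp only [Finset.mem_filter, Finset.mem_univ, true_and]
    exact fun x hx => hAB x hx y hy
  have := Finset.card_le_card hsub
  have := h A hA
  omega

set_option maxRecDepth 10000 in
/-- There is a subgraph of K_{7,21} with no K_{2,2} whose bipartite complement
has no K_{4,4}. -/
theorem good_coloring_7_21 :
    ∃ G : Finset (Fin 7 × Fin 21),
      ¬ ContainsK 7 21 2 2 G ∧ ¬ ContainsK 7 21 4 4 (bipCompl 7 21 G) := by
  refine ⟨myG, not_containsK_of_card ?_, not_containsK_of_card ?_⟩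
  · decide
  · decide
end

section
/- Let G be a subgraph of the complete bipartite graph K_{m,n} with parts X of size m ≥ 5 and Y of size n ≥ 8. If some vertex of X has degree at least 8 in G, then G contains K_{2,2} or the bipartite complement of G contains K_{4,4}. -/
/-- If m ≥ 5, n ≥ 8 and some vertex of the X-side of a subgraph G of K_{m,n} has
degree at least 8, then K_{2,2} ⊆ G or K_{4,4} ⊆ complement of G. -/
theorem deg_ge_eight (m n : ℕ) (hm : 5 ≤ m) (hn : 8 ≤ n)
    (G : Finset (Fin m × Fin n)) (x : Fin m) (hx : 8 ≤ degX m n G x) :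
    ContainsK m n 2 2 G ∨ ContainsK m n 4 4 (bipCompl m n G) := by
  by_cases h22 : ContainsK m n 2 2 G
  · exact Or.inl h22
  right
  set N := nbhd m n G x with hN
  -- each other vertex shares at most one neighbor with x
  have hshare : ∀ a : Fin m, a ≠ x → (nbhd m n G a ∩ N).card ≤ 1 := by
    intro a ha
    by_contra hc
    push_neg at hc
    obtain ⟨y₁, hy₁, y₂, hy₂, hyne⟩ := Finset.one_lt_card.mp hc
    apply h22
    refine ⟨{a, x}, {y₁, y₂}, ?_, ?_, ?_⟩
    · rw [Finset.card_insert_of_notMem (by simpa using ha)]; simp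
    · rw [Finset.card_insert_of_notMem (by simpa using hyne)]; simp
    · intro u hu v hv
      simp only [Finset.mem_insert, Finset.mem_singleton] at hu hv
      have h1 : y₁ ∈ nbhd m n G a ∧ y₁ ∈ N := Finset.mem_inter.mp hy₁
      have h2 : y₂ ∈ nbhd m n G a ∧ y₂ ∈ N := Finset.mem_inter.mp hy₂
      simp only [hN, nbhd, Finset.mem_filter] at h1 h2
      rcases hu with rfl | rfl <;> rcases hv with rfl | rfl <;> tauto
  -- choose 4 vertices different from x
  have hcard : 4 ≤ (Finset.univ.erase x : Finset (Fin m)).card := by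
    rw [Finset.card_erase_of_mem (Finset.mem_univ x), Finset.card_univ, Fintype.card_fin]
    omega
  obtain ⟨A, hAsub, hA4⟩ := Finset.exists_subset_card_eq hcard
  -- their neighbors cover at most 4 elements of N
  have hcover : (A.biUnion (fun a => nbhd m n G a ∩ N)).card ≤ 4 := by
    calc (A.biUnion (fun a => nbhd m n G a ∩ N)).card
        ≤ ∑ a ∈ A, (nbhd m n G a ∩ N).card := Finset.card_biUnion_le
      _ ≤ ∑ _a ∈ A, 1 := Finset.sum_le_sum (fun a ha =>
          hshare a (Finset.ne_of_mem_erase (hAsub ha)))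
      _ = A.card := by simp
      _ ≤ 4 := le_of_eq hA4
  have hB : 4 ≤ (N \ A.biUnion (fun a => nbhd m n G a ∩ N)).card := by
    have := Finset.le_card_sdiff (A.biUnion (fun a => nbhd m n G a ∩ N)) N
    have hxN : 8 ≤ N.card := hx
    omega
  obtain ⟨B, hBsub, hB4⟩ := Finset.exists_subset_card_eq hB
  refine ⟨A, B, hA4, hB4, ?_⟩
  intro a ha y hy
  have hy' := hBsub hy
  rw [Finset.mem_sdiff] at hy'
  simp only [bipCompl, Finset.mem_sdiff, Finset.mem_univ, true_and]
  intro hG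
  exact hy'.2 (Finset.mem_biUnion.mpr ⟨a, ha,
    Finset.mem_inter.mpr ⟨by simp [nbhd, hG], hy'.1⟩⟩)
end

section
/- Let G be a subgraph of the complete bipartite graph K_{m,n} with parts X of size m ≥ 9 and Y of size n ≥ 9. If some vertex of X has degree at least 7 in G, then G contains K_{2,2} or the bipartite complement of G contains K_{4,4}. -/
open Finset

section Traces

variable {α β : Type*} [DecidableEq β] {S : Finset α} {N : Finset β}

theorem exists_ne_card_union_le_one {u : α → Finset β} (hS : 1 < S.card)
    (hSN : N.card < S.card) (hsub : ∀ a ∈ S, u a ⊆ N) (hle : ∀ a ∈ S, (u a).card ≤ 1) :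
    ∃ a ∈ S, ∃ b ∈ S, a ≠ b ∧ (u a ∪ u b).card ≤ 1 := by
  by_cases hempty : ∃ a ∈ S, u a = ∅
  · obtain ⟨a, ha, hua⟩ := hempty
    obtain ⟨b, hb, hba⟩ := exists_mem_ne hS a
    exact ⟨a, ha, b, hb, hba.symm, by simpa [hua] using hle b hb⟩
  push Not at hempty
  -- all traces are singletons in `N`, and there are only `|N|` of those
  have hmaps : Set.MapsTo u S (N.powersetCard 1) := fun a ha =>
    mem_powersetCard.mpr ⟨hsub a ha, le_antisymm (hle a ha) (card_pos.mpr (hempty a ha))⟩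
  obtain ⟨a, ha, b, hb, hab, hu⟩ := exists_ne_map_eq_of_card_lt_of_maps_to
    (by simpa using hSN) hmaps
  exact ⟨a, ha, b, hb, hab, by simpa [hu] using hle b hb⟩

theorem exists_card_biUnion_le [DecidableEq α] {u : α → Finset β} {k : ℕ} (hk : 2 ≤ k)
    (hkS : k ≤ S.card) (hSN : N.card < S.card) (hsub : ∀ a ∈ S, u a ⊆ N)
    (hle : ∀ a ∈ S, (u a).card ≤ 1) :
    ∃ A ⊆ S, A.card = k ∧ (A.biUnion u).card ≤ k - 1 := by
  obtain ⟨a, ha, b, hb, hab, hpair⟩ := exists_ne_card_union_le_one (by omega) hSN hsub hle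
  have hrest : k - 2 ≤ ((S.erase a).erase b).card := by
    rw [card_erase_of_mem (mem_erase.mpr ⟨hab.symm, hb⟩), card_erase_of_mem ha]
    omega
  obtain ⟨C, hCS, hC⟩ := exists_subset_card_eq hrest
  have hbC : b ∉ C := fun h => by simpa using hCS h
  have haC : a ∉ insert b C := by
    simpa [hab] using fun h => (mem_erase.mp (mem_erase.mp (hCS h)).2).1 rfl
  have hCS' : C ⊆ S := hCS.trans ((erase_subset _ _).trans (erase_subset _ _))
  refine ⟨insert a (insert b C), insert_subset ha (insert_subset hb hCS'), ?_, ?_⟩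
  · rw [card_insert_of_notMem haC, card_insert_of_notMem hbC]
    omega
  · calc ((insert a (insert b C)).biUnion u).card
          = ((u a ∪ u b) ∪ C.biUnion u).card := by
            rw [biUnion_insert, biUnion_insert, union_assoc]
      _ ≤ 1 + C.card * 1 := (card_union_le _ _).trans
          (add_le_add hpair (card_biUnion_le_card_mul C u 1 fun c hc => hle c (hCS' hc)))
      _ ≤ k - 1 := by omega

theorem exists_disjoint_of_card_inter_le_one [DecidableEq α] (f : α → Finset β) {k : ℕ}
    (hk : 2 ≤ k) (hkS : k ≤ S.card) (hN : 2 * k ≤ N.card + 1) (hSN : N.card < S.card)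
    (hle : ∀ a ∈ S, (f a ∩ N).card ≤ 1) :
    ∃ A ⊆ S, ∃ B ⊆ N, A.card = k ∧ B.card = k ∧ ∀ a ∈ A, Disjoint (f a) B := by
  obtain ⟨A, hAS, hA, hcover⟩ := exists_card_biUnion_le (u := fun a => f a ∩ N) hk hkS hSN
    (fun _ _ => inter_subset_right) hle
  have hfree : k ≤ (N \ A.biUnion fun a => f a ∩ N).card :=
    (by omega : k ≤ N.card - _).trans (le_card_sdiff _ _)
  obtain ⟨B, hB, hBk⟩ := exists_subset_card_eq hfree
  refine ⟨A, hAS, B, hB.trans sdiff_subset, hA, hBk, fun a ha => disjoint_left.mpr ?_⟩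
  intro y hya hyB
  obtain ⟨hyN, hyA⟩ := mem_sdiff.mp (hB hyB)
  exact hyA (mem_biUnion.mpr ⟨a, ha, mem_inter.mpr ⟨hya, hyN⟩⟩)

end Traces

theorem card_nbhd_inter_le_one {m n : ℕ} {G : Finset (Fin m × Fin n)} {x x' : Fin m}
    (hne : x' ≠ x) (hG : ¬ ContainsK m n 2 2 G) :
    (nbhd m n G x' ∩ nbhd m n G x).card ≤ 1 := by
  by_contra! hcard
  obtain ⟨y, hy, y', hy', hyy'⟩ := one_lt_card.mp hcard
  simp only [nbhd, mem_inter, mem_filter, mem_univ, true_and] at hy hy'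
  refine hG ⟨{x', x}, {y, y'}, card_pair hne, card_pair hyy', fun a ha b hb => ?_⟩
  simp only [mem_insert, mem_singleton] at ha hb
  rcases ha with rfl | rfl <;> rcases hb with rfl | rfl <;> tauto

theorem containsK_bipCompl_of_disjoint {m n s t : ℕ} {G : Finset (Fin m × Fin n)}
    {A : Finset (Fin m)} {B : Finset (Fin n)} (hA : A.card = s) (hB : B.card = t)
    (hAB : ∀ a ∈ A, Disjoint (nbhd m n G a) B) : ContainsK m n s t (bipCompl m n G) := by
  refine ⟨A, B, hA, hB, fun a ha y hy => ?_⟩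
  simp only [bipCompl, mem_sdiff, mem_univ, true_and]
  exact fun hG => disjoint_left.mp (hAB a ha) (by simpa [nbhd] using hG) hy

theorem deg_ge_seven_general (m n : ℕ) (hm : 9 ≤ m)
    (G : Finset (Fin m × Fin n)) (x : Fin m) (hx : 7 ≤ degX m n G x) :
    ContainsK m n 2 2 G ∨ ContainsK m n 4 4 (bipCompl m n G) := by
  by_contra! ⟨hK22, hK44⟩
  obtain ⟨N, hNx, hN⟩ := exists_subset_card_eq hx
  have hS : (univ.erase x).card = m - 1 := by simp
  have htrace : ∀ a ∈ univ.erase x, (nbhd m n G a ∩ N).card ≤ 1 := fun a ha =>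
    (card_le_card (inter_subset_inter_left hNx)).trans
      (card_nbhd_inter_le_one (ne_of_mem_erase ha) hK22)
  obtain ⟨A, -, B, -, hA, hB, hAB⟩ := exists_disjoint_of_card_inter_le_one (nbhd m n G)
    (k := 4) le_add_self (by omega) (by omega) (by omega) htrace
  exact hK44 (containsK_bipCompl_of_disjoint hA hB hAB)

/-- If m ≥ 9, n ≥ 9 and some vertex of the X-side of a subgraph G of K_{m,n} has
degree at least 7, then K_{2,2} ⊆ G or K_{4,4} ⊆ complement of G. -/
theorem deg_ge_seven (m n : ℕ) (hm : 9 ≤ m) (hn : 9 ≤ n)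
    (G : Finset (Fin m × Fin n)) (x : Fin m) (hx : 7 ≤ degX m n G x) :
    ContainsK m n 2 2 G ∨ ContainsK m n 4 4 (bipCompl m n G) :=
  deg_ge_seven_general m n hm G x hx
end

section
/- Let G be a subgraph of the complete bipartite graph K_{5,26} with parts X of size 5 and Y of size 26 such that G contains no K_{2,2}. If the maximum degree over vertices of X equals 7, then the bipartite complement of G contains K_{4,4}. -/
/-- If G is a K_{2,2}-free subgraph of K_{5,26} whose maximum degree over the
X-side equals 7, then the bipartite complement of G contains K_{4,4}. -/
theorem maxdeg_7_K5_26 (G : Finset (Fin 5 × Fin 26))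
    (hfree : ¬ ContainsK 5 26 2 2 G)
    (hdeg : Finset.univ.sup (degX 5 26 G) = 7) :
    ContainsK 5 26 4 4 (bipCompl 5 26 G) := by
  classical
  set N : Fin 5 → Finset (Fin 26) := nbhd 5 26 G with hNdef
  have hmemN : ∀ (i : Fin 5) (y : Fin 26), y ∈ N i ↔ (i, y) ∈ G := by
    intro i y; simp [hNdef, nbhd]
  -- pairwise intersections ≤ 1
  have hpair : ∀ i j : Fin 5, i ≠ j → (N i ∩ N j).card ≤ 1 := by
    intro i j hij
    by_contra h
    push_neg at h
    obtain ⟨y1, hy1, y2, hy2, hne⟩ := Finset.one_lt_card.mp h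
    simp only [Finset.mem_inter, hmemN] at hy1 hy2
    apply hfree
    refine ⟨{i, j}, {y1, y2}, ?_, ?_, ?_⟩
    · rw [Finset.card_insert_of_notMem (by simp [hij]), Finset.card_singleton]
    · rw [Finset.card_insert_of_notMem (by simp [hne]), Finset.card_singleton]
    · intro x hx y hy
      simp only [Finset.mem_insert, Finset.mem_singleton] at hx hy
      rcases hx with rfl | rfl <;> rcases hy with rfl | rfl <;> tauto
  set U : Finset (Fin 26) := Finset.univ.biUnion N with hUdef
  have hu : U.card ≤ 26 := by
    calc U.card ≤ (Finset.univ : Finset (Fin 26)).card := Finset.card_le_card (Finset.subset_univ _)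
    _ = 26 := by simp
  -- points in at least two neighborhoods
  set R : Finset (Fin 26) := U.filter (fun y => ∃ i j : Fin 5, i ≠ j ∧ y ∈ N i ∧ y ∈ N j) with hRdef
  set P : Finset (Fin 5 × Fin 5) := Finset.univ.filter (fun p => p.1 < p.2) with hPdef
  have hPcard : P.card = 10 := by decide
  have hRsub : R ⊆ P.biUnion (fun p => N p.1 ∩ N p.2) := by
    intro y hy
    simp only [hRdef, Finset.mem_filter] at hy
    obtain ⟨-, i, j, hij, hyi, hyj⟩ := hy
    rcases lt_or_gt_of_ne hij with h | h
    · exact Finset.mem_biUnion.mpr ⟨(i, j), by simp [hPdef, h], Finset.mem_inter.mpr ⟨hyi, hyj⟩⟩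
    · exact Finset.mem_biUnion.mpr ⟨(j, i), by simp [hPdef, h], Finset.mem_inter.mpr ⟨hyj, hyi⟩⟩
  have hR : R.card ≤ 10 := by
    calc R.card ≤ (P.biUnion (fun p => N p.1 ∩ N p.2)).card := Finset.card_le_card hRsub
    _ ≤ ∑ p ∈ P, (N p.1 ∩ N p.2).card := Finset.card_biUnion_le
    _ ≤ ∑ _p ∈ P, 1 := by
        refine Finset.sum_le_sum ?_
        intro p hp
        simp only [hPdef, Finset.mem_filter] at hp
        exact hpair p.1 p.2 (ne_of_lt hp.2)
    _ = 10 := by rw [Finset.sum_const, hPcard]; simp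
  -- exclusive sets
  set excl : Fin 5 → Finset (Fin 26) := fun j => U.filter (fun y => ∀ i, y ∈ N i → i = j)
    with hexdef
  have hcover : U \ R ⊆ Finset.univ.biUnion excl := by
    intro y hy
    simp only [Finset.mem_sdiff, hRdef, Finset.mem_filter, not_and, not_exists] at hy
    obtain ⟨hyU, hy2⟩ := hy
    obtain ⟨i, -, hyi⟩ := Finset.mem_biUnion.mp hyU
    refine Finset.mem_biUnion.mpr ⟨i, Finset.mem_univ _, ?_⟩
    simp only [hexdef, Finset.mem_filter]
    refine ⟨hyU, fun i' hyi' => ?_⟩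
    by_contra hne
    have h4 := hy2 hyU i' i
    tauto
  have hsum1 : U.card ≤ (∑ j, (excl j).card) + R.card := by
    have h1 : (U \ R).card ≤ ∑ j, (excl j).card :=
      le_trans (Finset.card_le_card hcover) Finset.card_biUnion_le
    have h2 : U.card ≤ (U \ R).card + R.card := by
      have := Finset.card_sdiff_add_card U R
      have h3 : U ⊆ U ∪ R := Finset.subset_union_left
      have := Finset.card_le_card h3
      omega
    omega
  have hexclU : ∀ j, (excl j).card ≤ U.card := fun j =>
    Finset.card_le_card (Finset.filter_subset _ _)
  -- pigeonhole: some j with U.card ≤ excl j + 22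
  have hmain : ∃ j : Fin 5, U.card ≤ (excl j).card + 22 := by
    by_contra hall
    push_neg at hall
    have hall' : ∀ j : Fin 5, (excl j).card + 23 ≤ U.card := fun j => hall j
    have hS : (∑ j, (excl j).card) + 115 ≤ 5 * U.card := by
      have := Finset.sum_le_sum (fun j (_ : j ∈ (Finset.univ : Finset (Fin 5))) => hall' j)
      simp only [Finset.sum_add_distrib, Finset.sum_const, Finset.card_univ,
        Fintype.card_fin, smul_eq_mul] at this
      omega
    omega
  obtain ⟨j, hj⟩ := hmain
  -- the bad set: union of other neighborhoods
  set Bad : Finset (Fin 26) := (Finset.univ.erase j).biUnion N with hBaddef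
  have hBadU : Bad ⊆ U := by
    intro y hy
    obtain ⟨i, hi, hyi⟩ := Finset.mem_biUnion.mp hy
    exact Finset.mem_biUnion.mpr ⟨i, Finset.mem_univ _, hyi⟩
  have hexclBad : excl j ⊆ U \ Bad := by
    intro y hy
    simp only [hexdef, Finset.mem_filter] at hy
    obtain ⟨hyU, hyall⟩ := hy
    refine Finset.mem_sdiff.mpr ⟨hyU, fun hyB => ?_⟩
    obtain ⟨i, hi, hyi⟩ := Finset.mem_biUnion.mp hyB
    exact (Finset.ne_of_mem_erase hi) (hyall i hyi)
  have hBadcard : Bad.card ≤ 22 := by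
    have h1 : (excl j).card ≤ U.card - Bad.card := by
      have := Finset.card_le_card hexclBad
      rwa [Finset.card_sdiff_of_subset hBadU] at this
    have h2 : Bad.card ≤ U.card := Finset.card_le_card hBadU
    omega
  -- the good set
  have hGood : 4 ≤ (Finset.univ \ Bad : Finset (Fin 26)).card := by
    rw [Finset.card_sdiff_of_subset (Finset.subset_univ _)]
    simp only [Finset.card_univ, Fintype.card_fin]
    omega
  obtain ⟨B, hBsub, hBcard⟩ := Finset.exists_subset_card_eq hGood
  refine ⟨Finset.univ.erase j, B, ?_, hBcard, ?_⟩
  · rw [Finset.card_erase_of_mem (Finset.mem_univ _)]; simp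
  · intro x hx y hy
    simp only [bipCompl, Finset.mem_sdiff, Finset.mem_univ, true_and]
    intro hxy
    have hyN : y ∈ N x := (hmemN x y).mpr hxy
    have : y ∈ Bad := Finset.mem_biUnion.mpr ⟨x, hx, hyN⟩
    have := Finset.mem_sdiff.mp (hBsub hy)
    exact this.2 ‹y ∈ Bad›
end

section
/- Let G be a subgraph of the complete bipartite graph K_{6,22} with parts X of size 6 and Y of size 22 such that G contains no K_{2,2}. If the maximum degree over vertices of X equals 7, then the bipartite complement of G contains K_{4,4}. -/
/-- The set of `X`-neighbors of a point `p` of the `Y`-side. -/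
def Sp (G : Finset (Fin 6 × Fin 22)) (p : Fin 22) : Finset (Fin 6) :=
  Finset.univ.filter (fun x => (x, p) ∈ G)

lemma pairInt {G : Finset (Fin 6 × Fin 22)} (hfree : ¬ ContainsK 6 22 2 2 G)
    {p q : Fin 22} (hpq : p ≠ q) : (Sp G p ∩ Sp G q).card ≤ 1 := by
  by_contra h
  push_neg at h
  obtain ⟨a, ha, b, hb, hab⟩ := Finset.one_lt_card.mp h
  refine hfree ⟨{a, b}, {p, q}, ?_, ?_, ?_⟩
  · exact Finset.card_pair hab
  · exact Finset.card_pair hpq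
  · intro x hx y hy
    simp only [Finset.mem_insert, Finset.mem_singleton] at hx hy
    have ha' := Finset.mem_inter.mp ha
    have hb' := Finset.mem_inter.mp hb
    simp only [Sp, Finset.mem_filter, Finset.mem_univ, true_and] at ha' hb'
    rcases hx with rfl | rfl <;> rcases hy with rfl | rfl <;> tauto

lemma goodPair {G : Finset (Fin 6 × Fin 22)} {u v : Fin 6} (huv : u ≠ v)
    (h : 4 ≤ (Finset.univ.filter (fun p => Sp G p ⊆ {u, v})).card) :
    ContainsK 6 22 4 4 (bipCompl 6 22 G) := by
  obtain ⟨B, hBsub, hBcard⟩ := Finset.exists_subset_card_eq h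
  refine ⟨({u, v} : Finset (Fin 6))ᶜ, B, ?_, hBcard, ?_⟩
  · rw [Finset.card_compl, Finset.card_pair huv]
    rfl
  · intro x hx y hy
    have hy' := hBsub hy
    simp only [Finset.mem_filter] at hy'
    simp only [Finset.mem_compl] at hx
    simp only [bipCompl, Finset.mem_sdiff, Finset.mem_univ, true_and]
    intro hxy
    have : x ∈ Sp G y := by simp [Sp, hxy]
    exact hx (hy'.2 this)

lemma M0_le5 {G : Finset (Fin 6 × Fin 22)} (hfree : ¬ ContainsK 6 22 2 2 G) (x0 : Fin 6) :
    (Finset.univ.filter fun p => x0 ∈ Sp G p ∧ 2 ≤ (Sp G p).card).card ≤ 5 := by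
  have h5 : (Finset.univ.erase x0).card = 5 := by
    rw [Finset.card_erase_of_mem (Finset.mem_univ x0)]; rfl
  rw [← h5]
  apply Finset.card_le_card_of_injOn
    (fun p => if h : ((Sp G p).erase x0).Nonempty then h.choose else x0)
  · intro p hp
    simp only [Finset.mem_coe, Finset.mem_filter] at hp ⊢
    have hne : ((Sp G p).erase x0).Nonempty := by
      apply Finset.card_pos.mp
      rw [Finset.card_erase_of_mem hp.2.1]
      omega
    rw [dif_pos hne]
    have := hne.choose_spec
    simp only [Finset.mem_erase] at this ⊢
    exact ⟨this.1, Finset.mem_univ _⟩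
  · intro p hp q hq hfpq
    by_contra hpq
    simp only [Finset.mem_coe, Finset.mem_filter] at hp hq
    have hnep : ((Sp G p).erase x0).Nonempty := by
      apply Finset.card_pos.mp; rw [Finset.card_erase_of_mem hp.2.1]; omega
    have hneq : ((Sp G q).erase x0).Nonempty := by
      apply Finset.card_pos.mp; rw [Finset.card_erase_of_mem hq.2.1]; omega
    dsimp only at hfpq
    rw [dif_pos hnep, dif_pos hneq] at hfpq
    have h1 := hnep.choose_spec
    have h2 := hneq.choose_spec
    rw [hfpq] at h1
    simp only [Finset.mem_erase] at h1 h2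
    have : 1 < (Sp G p ∩ Sp G q).card := by
      apply Finset.one_lt_card.mpr
      exact ⟨x0, Finset.mem_inter.mpr ⟨hp.2.1, hq.2.1⟩,
        hneq.choose, Finset.mem_inter.mpr ⟨h1.2, h2.2⟩, (h1.1).symm⟩
    exact absurd (pairInt hfree hpq) (by omega)

lemma T1_le10 {G : Finset (Fin 6 × Fin 22)} (hfree : ¬ ContainsK 6 22 2 2 G) (x0 : Fin 6) :
    (Finset.univ.filter fun p => x0 ∉ Sp G p ∧ 2 ≤ (Sp G p).card).card ≤ 10 := by
  have h10 : (Finset.powersetCard 2 (Finset.univ.erase x0)).card = 10 := by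
    rw [Finset.card_powersetCard, Finset.card_erase_of_mem (Finset.mem_univ x0)]
    rfl
  rw [← h10]
  apply Finset.card_le_card_of_injOn
    (fun p => if h : 2 ≤ (Sp G p).card then (Finset.exists_subset_card_eq h).choose else ∅)
  · intro p hp
    simp only [Finset.mem_coe, Finset.mem_filter] at hp ⊢
    rw [dif_pos hp.2.2]
    have hs := (Finset.exists_subset_card_eq hp.2.2).choose_spec
    rw [Finset.mem_powersetCard]
    refine ⟨?_, hs.2⟩
    intro a ha
    have haS := hs.1 ha
    simp only [Finset.mem_erase]
    exact ⟨fun h => hp.2.1 (h ▸ haS), Finset.mem_univ _⟩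
  · intro p hp q hq hfpq
    by_contra hpq
    simp only [Finset.mem_coe, Finset.mem_filter] at hp hq
    dsimp only at hfpq
    rw [dif_pos hp.2.2, dif_pos hq.2.2] at hfpq
    have h1 := (Finset.exists_subset_card_eq hp.2.2).choose_spec
    have h2 := (Finset.exists_subset_card_eq hq.2.2).choose_spec
    have hsub : (Finset.exists_subset_card_eq hp.2.2).choose ⊆ Sp G p ∩ Sp G q := by
      intro a ha
      exact Finset.mem_inter.mpr ⟨h1.1 ha, h2.1 (hfpq ▸ ha)⟩
    have : 2 ≤ (Sp G p ∩ Sp G q).card := h1.2 ▸ Finset.card_le_card hsub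
    exact absurd (pairInt hfree hpq) (by omega)

lemma M0_eq5 {G : Finset (Fin 6 × Fin 22)} (hfree : ¬ ContainsK 6 22 2 2 G) {x0 : Fin 6}
    (h5 : (Finset.univ.filter fun p => x0 ∈ Sp G p ∧ 2 ≤ (Sp G p).card).card = 5)
    {v : Fin 6} (hv : v ≠ x0) : ∃ p, Sp G p = {x0, v} := by
  set M0 := Finset.univ.filter fun p => x0 ∈ Sp G p ∧ 2 ≤ (Sp G p).card with hM0
  have hdisj : ∀ p ∈ M0, ∀ q ∈ M0, p ≠ q →
      Disjoint ((Sp G p).erase x0) ((Sp G q).erase x0) := by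
    intro p hp q hq hpq
    rw [Finset.disjoint_left]
    intro y hyp hyq
    simp only [hM0, Finset.mem_filter] at hp hq
    simp only [Finset.mem_erase] at hyp hyq
    have : 1 < (Sp G p ∩ Sp G q).card := by
      apply Finset.one_lt_card.mpr
      exact ⟨x0, Finset.mem_inter.mpr ⟨hp.2.1, hq.2.1⟩,
        y, Finset.mem_inter.mpr ⟨hyp.2, hyq.2⟩, (hyp.1).symm⟩
    exact absurd (pairInt hfree hpq) (by omega)
  have hcardD : (M0.biUnion fun p => (Sp G p).erase x0).card
      = ∑ p ∈ M0, ((Sp G p).erase x0).card := Finset.card_biUnion hdisj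
  have hDsub : (M0.biUnion fun p => (Sp G p).erase x0) ⊆ Finset.univ.erase x0 := by
    intro y hy
    simp only [Finset.mem_biUnion] at hy
    obtain ⟨p, hp, hyp⟩ := hy
    simp only [Finset.mem_erase] at hyp ⊢
    exact ⟨hyp.1, Finset.mem_univ _⟩
  have h5' : (Finset.univ.erase x0).card = 5 := by
    rw [Finset.card_erase_of_mem (Finset.mem_univ x0)]; rfl
  have hsum_le : ∑ p ∈ M0, ((Sp G p).erase x0).card ≤ 5 := by
    rw [← hcardD]
    exact h5' ▸ Finset.card_le_card hDsub
  have hone_le : ∀ p ∈ M0, 1 ≤ ((Sp G p).erase x0).card := by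
    intro p hp
    simp only [hM0, Finset.mem_filter] at hp
    rw [Finset.card_erase_of_mem hp.2.1]
    omega
  have hone : ∀ p ∈ M0, ((Sp G p).erase x0).card = 1 := by
    intro p0 hp0
    by_contra hne
    have h2 : 1 < ((Sp G p0).erase x0).card :=
      lt_of_le_of_ne (hone_le p0 hp0) (Ne.symm hne)
    have := Finset.sum_lt_sum (f := fun _ => 1)
      (g := fun p => ((Sp G p).erase x0).card) hone_le ⟨p0, hp0, h2⟩
    rw [Finset.sum_const, h5, smul_eq_mul] at this
    omega
  have hsum_eq : ∑ p ∈ M0, ((Sp G p).erase x0).card = 5 := by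
    rw [Finset.sum_congr rfl hone, Finset.sum_const, h5, smul_eq_mul]
  have hDeq : (M0.biUnion fun p => (Sp G p).erase x0) = Finset.univ.erase x0 := by
    apply Finset.eq_of_subset_of_card_le hDsub
    rw [hcardD, hsum_eq, h5']
  have hvD : v ∈ M0.biUnion fun p => (Sp G p).erase x0 := by
    rw [hDeq, Finset.mem_erase]
    exact ⟨hv, Finset.mem_univ _⟩
  simp only [Finset.mem_biUnion] at hvD
  obtain ⟨p, hp, hvp⟩ := hvD
  refine ⟨p, ?_⟩
  obtain ⟨a, ha⟩ := Finset.card_eq_one.mp (hone p hp)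
  have hva : v = a := by rw [ha] at hvp; exact Finset.mem_singleton.mp hvp
  have hx0p : x0 ∈ Sp G p := by
    simp only [hM0, Finset.mem_filter] at hp; exact hp.2.1
  have := Finset.insert_erase hx0p
  rw [ha, ← hva] at this
  rw [← this]

/-- If G is a K_{2,2}-free subgraph of K_{6,22} whose maximum degree over the
X-side equals 7, then the bipartite complement of G contains K_{4,4}. -/
theorem maxdeg_7_K6_22 (G : Finset (Fin 6 × Fin 22))
    (hfree : ¬ ContainsK 6 22 2 2 G)
    (hdeg : Finset.univ.sup (degX 6 22 G) = 7) :
    ContainsK 6 22 4 4 (bipCompl 6 22 G) := by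
  obtain ⟨x0, -, hx0⟩ :=
    Finset.exists_mem_eq_sup Finset.univ Finset.univ_nonempty (degX 6 22 G)
  rw [hdeg] at hx0
  -- hx0 : 7 = degX 6 22 G x0
  by_contra hgoal
  have hpairs : ∀ u v : Fin 6, u ≠ v →
      (Finset.univ.filter fun p => Sp G p ⊆ {u, v}).card ≤ 3 := by
    intro u v huv
    by_contra h
    push_neg at h
    exact hgoal (goodPair huv (by omega))
  set U := Finset.univ.filter fun p => Sp G p = (∅ : Finset (Fin 6)) with hU
  set P : Fin 6 → Finset (Fin 22) :=
    fun x => Finset.univ.filter fun p => Sp G p = {x} with hP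
  set M0 := Finset.univ.filter fun p => x0 ∈ Sp G p ∧ 2 ≤ (Sp G p).card with hM0
  set T1 := Finset.univ.filter fun p => x0 ∉ Sp G p ∧ 2 ≤ (Sp G p).card with hT1
  -- (a) card (P x0) + card M0 = 7
  have hdisjPM : Disjoint (P x0) M0 := by
    rw [Finset.disjoint_left]
    intro p hp hp'
    simp only [hP, hM0, Finset.mem_filter] at hp hp'
    rw [hp.2, Finset.card_singleton] at hp'
    omega
  have hPM7 : (P x0).card + M0.card = 7 := by
    have hun : P x0 ∪ M0 = Finset.univ.filter fun p => x0 ∈ Sp G p := by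
      ext p
      simp only [hP, hM0, Finset.mem_union, Finset.mem_filter, Finset.mem_univ, true_and]
      constructor
      · rintro (h | h)
        · rw [h]; exact Finset.mem_singleton_self x0
        · exact h.1
      · intro h
        rcases Nat.lt_or_ge (Sp G p).card 2 with hc | hc
        · left
          have h1 : (Sp G p).card = 1 := by
            have : 1 ≤ (Sp G p).card := Finset.card_pos.mpr ⟨x0, h⟩
            omega
          obtain ⟨a, ha⟩ := Finset.card_eq_one.mp h1
          rw [ha] at h ⊢
          rw [Finset.mem_singleton.mp h]
        · right; exact ⟨h, hc⟩
    have hnb : (Finset.univ.filter fun p => x0 ∈ Sp G p) = nbhd 6 22 G x0 := by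
      ext p
      simp [Sp, nbhd]
    have := Finset.card_union_of_disjoint hdisjPM
    rw [hun, hnb] at this
    rw [← this]
    exact hx0.symm
  have hM0le5 := M0_le5 hfree x0
  have hT1le10 := T1_le10 hfree x0
  rw [← hM0] at hM0le5
  rw [← hT1] at hT1le10
  obtain ⟨v0, hv0⟩ := exists_ne x0
  -- (e) card U ≤ 1
  have hUsub : ∀ v : Fin 6, U ⊆ Finset.univ.filter fun p => Sp G p ⊆ {x0, v} := by
    intro v p hp
    simp only [hU, Finset.mem_filter] at hp ⊢
    exact ⟨Finset.mem_univ _, by rw [hp.2]; exact Finset.empty_subset _⟩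
  have hPx0sub : ∀ v : Fin 6, P x0 ⊆ Finset.univ.filter fun p => Sp G p ⊆ {x0, v} := by
    intro v p hp
    simp only [hP, Finset.mem_filter] at hp ⊢
    refine ⟨Finset.mem_univ _, by rw [hp.2]; exact Finset.singleton_subset_iff.mpr (Finset.mem_insert_self _ _)⟩
  have hdisjUP : Disjoint U (P x0) := by
    rw [Finset.disjoint_left]
    intro p hp hp'
    simp only [hU, hP, Finset.mem_filter] at hp hp'
    rw [hp.2] at hp'
    exact absurd hp'.2.symm (Finset.singleton_ne_empty x0)
  have hU1 : U.card ≤ 1 := by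
    have hsub : U ∪ P x0 ⊆ Finset.univ.filter fun p => Sp G p ⊆ {x0, v0} :=
      Finset.union_subset (hUsub v0) (hPx0sub v0)
    have := Finset.card_le_card hsub
    rw [Finset.card_union_of_disjoint hdisjUP] at this
    have h3 := hpairs x0 v0 (Ne.symm hv0)
    omega
  -- (f) P v = 0 for v ≠ x0
  have hPv : ∀ v : Fin 6, v ≠ x0 → (P v).card = 0 := by
    intro v hv
    by_contra hne
    have hv1 : 1 ≤ (P v).card := Nat.pos_of_ne_zero hne
    set Ev := Finset.univ.filter fun p => Sp G p = {x0, v} with hEv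
    -- all four sets are in the pair-set of (x0, v), pairwise disjoint
    have hPvsub : P v ⊆ Finset.univ.filter fun p => Sp G p ⊆ {x0, v} := by
      intro p hp
      simp only [hP, Finset.mem_filter] at hp ⊢
      refine ⟨Finset.mem_univ _, by rw [hp.2]; exact Finset.singleton_subset_iff.mpr (Finset.mem_insert_of_mem (Finset.mem_singleton_self v))⟩
    have hEvsub : Ev ⊆ Finset.univ.filter fun p => Sp G p ⊆ {x0, v} := by
      intro p hp
      simp only [hEv, Finset.mem_filter] at hp ⊢
      exact ⟨Finset.mem_univ _, le_of_eq hp.2⟩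
    have hdisjUPv : Disjoint U (P v) := by
      rw [Finset.disjoint_left]
      intro p hp hp'
      simp only [hU, hP, Finset.mem_filter] at hp hp'
      rw [hp.2] at hp'
      exact absurd hp'.2.symm (Finset.singleton_ne_empty v)
    have hdisjPP : Disjoint (P x0) (P v) := by
      rw [Finset.disjoint_left]
      intro p hp hp'
      simp only [hP, Finset.mem_filter] at hp hp'
      rw [hp.2] at hp'
      exact hv (Finset.singleton_injective hp'.2).symm
    have hdisjUEv : Disjoint U Ev := by
      rw [Finset.disjoint_left]
      intro p hp hp'
      simp only [hU, hEv, Finset.mem_filter] at hp hp'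
      rw [hp.2] at hp'
      have : x0 ∈ ({x0, v} : Finset (Fin 6)) := Finset.mem_insert_self _ _
      rw [← hp'.2] at this
      exact absurd this (Finset.notMem_empty x0)
    have hdisjPx0Ev : Disjoint (P x0) Ev := by
      rw [Finset.disjoint_left]
      intro p hp hp'
      simp only [hP, hEv, Finset.mem_filter] at hp hp'
      rw [hp.2] at hp'
      have : v ∈ ({x0, v} : Finset (Fin 6)) :=
        Finset.mem_insert_of_mem (Finset.mem_singleton_self v)
      rw [← hp'.2] at this
      exact hv (Finset.mem_singleton.mp this)
    have hdisjPvEv : Disjoint (P v) Ev := by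
      rw [Finset.disjoint_left]
      intro p hp hp'
      simp only [hP, hEv, Finset.mem_filter] at hp hp'
      rw [hp.2] at hp'
      have : x0 ∈ ({x0, v} : Finset (Fin 6)) := Finset.mem_insert_self _ _
      rw [← hp'.2] at this
      exact hv (Finset.mem_singleton.mp this).symm
    have hsub : U ∪ P x0 ∪ P v ∪ Ev ⊆ Finset.univ.filter fun p => Sp G p ⊆ {x0, v} :=
      Finset.union_subset (Finset.union_subset
        (Finset.union_subset (hUsub v) (hPx0sub v)) hPvsub) hEvsub
    have hcard : (U ∪ P x0 ∪ P v ∪ Ev).card = U.card + (P x0).card + (P v).card + Ev.card := by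
      rw [Finset.card_union_of_disjoint, Finset.card_union_of_disjoint,
        Finset.card_union_of_disjoint hdisjUP]
      · rw [Finset.disjoint_union_left]; exact ⟨hdisjUPv, hdisjPP⟩
      · rw [Finset.disjoint_union_left, Finset.disjoint_union_left]
        exact ⟨⟨hdisjUEv, hdisjPx0Ev⟩, hdisjPvEv⟩
    have h3 := hpairs x0 v (Ne.symm hv)
    have hle := Finset.card_le_card hsub
    rw [hcard] at hle
    -- so card (P x0) ≤ 2, hence = 2, hence M0.card = 5, hence Ev nonempty
    have hM05 : M0.card = 5 := by omega
    obtain ⟨p, hp⟩ := M0_eq5 hfree (hM0 ▸ hM05) hv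
    have : p ∈ Ev := by
      simp only [hEv, Finset.mem_filter]
      exact ⟨Finset.mem_univ _, hp⟩
    have : 1 ≤ Ev.card := Finset.card_pos.mpr ⟨p, this⟩
    omega
  -- (g) final count
  have hcover : (Finset.univ : Finset (Fin 22)) ⊆ U ∪ P x0 ∪ M0 ∪ T1 := by
    intro p _
    simp only [hU, hP, hM0, hT1, Finset.mem_union, Finset.mem_filter, Finset.mem_univ, true_and]
    rcases Nat.lt_or_ge (Sp G p).card 2 with hc | hc
    · rcases Nat.lt_or_ge (Sp G p).card 1 with hc0 | hc1
      · left; left; left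
        exact Finset.card_eq_zero.mp (by omega)
      · have h1 : (Sp G p).card = 1 := by omega
        obtain ⟨a, ha⟩ := Finset.card_eq_one.mp h1
        by_cases hax : a = x0
        · left; left; right; rw [ha, hax]
        · exfalso
          have hpa : p ∈ P a := by
            simp only [hP, Finset.mem_filter]
            exact ⟨Finset.mem_univ _, ha⟩
          have := hPv a hax
          rw [Finset.card_eq_zero] at this
          rw [this] at hpa
          exact Finset.notMem_empty p hpa
    · by_cases hx : x0 ∈ Sp G p
      · left; right; exact ⟨hx, hc⟩
      · right; exact ⟨hx, hc⟩
  have h22 : 22 ≤ U.card + (P x0).card + M0.card + T1.card := by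
    have h1 : (Finset.univ : Finset (Fin 22)).card = 22 := by simp
    have h2 := Finset.card_le_card hcover
    rw [h1] at h2
    calc 22 ≤ (U ∪ P x0 ∪ M0 ∪ T1).card := h2
      _ ≤ (U ∪ P x0 ∪ M0).card + T1.card := Finset.card_union_le _ _
      _ ≤ (U ∪ P x0).card + M0.card + T1.card := by
          have := Finset.card_union_le (U ∪ P x0) M0
          omega
      _ ≤ U.card + (P x0).card + M0.card + T1.card := by
          have := Finset.card_union_le U (P x0)
          omega
  omega
end

section
/- Let G be a subgraph of the complete bipartite graph K_{9,14} with parts X of size 9 and Y of size 14 such that G contains no K_{2,2}. If the maximum degree over vertices of X equals 6, then the bipartite complement of G contains K_{4,4}. -/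
/-- If G is a K_{2,2}-free subgraph of K_{9,14} whose maximum degree over the
X-side equals 6, then the bipartite complement of G contains K_{4,4}. -/
theorem maxdeg_6_K9_14 (G : Finset (Fin 9 × Fin 14))
    (hfree : ¬ ContainsK 9 14 2 2 G)
    (hdeg : Finset.univ.sup (degX 9 14 G) = 6) :
    ContainsK 9 14 4 4 (bipCompl 9 14 G) := by
  classical
  obtain ⟨x0, -, hx0⟩ := Finset.exists_mem_eq_sup (Finset.univ : Finset (Fin 9))
    ⟨0, Finset.mem_univ 0⟩ (degX 9 14 G)
  have hx0deg : degX 9 14 G x0 = 6 := by rw [← hx0, hdeg]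
  set N : Finset (Fin 14) := nbhd 9 14 G x0 with hNdef
  have hNcard : N.card = 6 := hx0deg
  have hx0N : ∀ y ∈ N, (x0, y) ∈ G := by
    intro y hy
    simpa [hNdef, nbhd] using hy
  set E : Finset (Fin 9) := Finset.univ.erase x0 with hEdef
  have hEcard : E.card = 8 := by
    rw [hEdef, Finset.card_erase_of_mem (Finset.mem_univ x0)]
    simp
  -- each x ≠ x0 has at most one neighbor in N
  have key : ∀ x ∈ E, (N.filter (fun y => (x, y) ∈ G)).card ≤ 1 := by
    intro x hx
    by_contra h
    push_neg at h
    obtain ⟨a, ha, b, hb, hab⟩ := Finset.one_lt_card.1 h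
    rw [Finset.mem_filter] at ha hb
    apply hfree
    refine ⟨{x0, x}, {a, b}, ?_, ?_, ?_⟩
    · rw [Finset.card_insert_of_notMem, Finset.card_singleton]
      simp only [Finset.mem_singleton]
      exact fun hxx => (Finset.mem_erase.1 hx).1 hxx.symm
    · rw [Finset.card_insert_of_notMem, Finset.card_singleton]
      simpa using hab
    · intro x' hx' y hy
      rcases Finset.mem_insert.1 hx' with rfl | hx' <;>
      [skip; rw [Finset.mem_singleton] at hx'] <;>
      rcases Finset.mem_insert.1 hy with rfl | hy <;>
      first
        | exact hx0N _ ha.1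
        | (rw [Finset.mem_singleton] at hy; exact hy ▸ hx0N _ hb.1)
        | (subst hx'; exact ha.2)
        | (subst hx'; rw [Finset.mem_singleton] at hy; exact hy ▸ hb.2)
  -- codegree function
  set d : Fin 14 → ℕ := fun y => (E.filter (fun x => (x, y) ∈ G)).card with hddef
  have hsum : ∑ y ∈ N, d y ≤ 8 := by
    have : ∑ y ∈ N, d y = ∑ x ∈ E, (N.filter (fun y => (x, y) ∈ G)).card := by
      simp only [hddef, Finset.card_filter]
      exact Finset.sum_comm
    rw [this]
    calc ∑ x ∈ E, (N.filter (fun y => (x, y) ∈ G)).card ≤ ∑ x ∈ E, 1 :=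
          Finset.sum_le_sum key
      _ = 8 := by rw [Finset.sum_const, smul_eq_mul, mul_one, hEcard]
  -- pick the two largest-codegree vertices of N and remove them
  obtain ⟨y1, hy1N, hy1max⟩ := N.exists_max_image d (Finset.card_pos.1 (by omega))
  set N1 : Finset (Fin 14) := N.erase y1 with hN1def
  have hN1card : N1.card = 5 := by rw [hN1def, Finset.card_erase_of_mem hy1N, hNcard]
  obtain ⟨y2, hy2N1, hy2max⟩ := N1.exists_max_image d (Finset.card_pos.1 (by omega))
  set B : Finset (Fin 14) := N1.erase y2 with hBdef
  have hBcard : B.card = 4 := by rw [hBdef, Finset.card_erase_of_mem hy2N1, hN1card]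
  have hBsubN1 : B ⊆ N1 := Finset.erase_subset _ _
  have hN1subN : N1 ⊆ N := Finset.erase_subset _ _
  have hBsum : ∑ y ∈ B, d y ≤ 4 := by
    by_contra h
    push_neg at h
    have hex : ∃ y ∈ B, 2 ≤ d y := by
      by_contra h2
      push_neg at h2
      have : ∑ y ∈ B, d y ≤ B.card • 1 := Finset.sum_le_card_nsmul _ _ 1
        (fun y hy => by have := h2 y hy; omega)
      rw [hBcard] at this
      simp at this
      omega
    obtain ⟨y, hyB, hy2⟩ := hex
    have h2 : 2 ≤ d y2 := le_trans hy2 (hy2max y (hBsubN1 hyB))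
    have h1 : 2 ≤ d y1 := le_trans h2 (hy1max y2 (hN1subN hy2N1))
    have e1 : d y1 + ∑ y ∈ N1, d y = ∑ y ∈ N, d y := Finset.add_sum_erase _ _ hy1N
    have e2 : d y2 + ∑ y ∈ B, d y = ∑ y ∈ N1, d y := Finset.add_sum_erase _ _ hy2N1
    omega
  -- bad vertices: those in E with a neighbor in B
  set bad : Finset (Fin 9) := E.filter (fun x => ∃ y ∈ B, (x, y) ∈ G) with hbaddef
  have hbadcard : bad.card ≤ 4 := by
    have hsubset : bad ⊆ B.biUnion (fun y => E.filter (fun x => (x, y) ∈ G)) := by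
      intro x hx
      rw [hbaddef, Finset.mem_filter] at hx
      obtain ⟨hxE, y, hyB, hxy⟩ := hx
      exact Finset.mem_biUnion.2 ⟨y, hyB, Finset.mem_filter.2 ⟨hxE, hxy⟩⟩
    calc bad.card ≤ (B.biUnion (fun y => E.filter (fun x => (x, y) ∈ G))).card :=
          Finset.card_le_card hsubset
      _ ≤ ∑ y ∈ B, (E.filter (fun x => (x, y) ∈ G)).card := Finset.card_biUnion_le
      _ = ∑ y ∈ B, d y := rfl
      _ ≤ 4 := hBsum
  set good : Finset (Fin 9) := E \ bad with hgooddef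
  have hgoodcard : 4 ≤ good.card := by
    have hsub : bad ⊆ E := Finset.filter_subset _ _
    have h := Finset.card_sdiff_add_card_eq_card hsub
    rw [hgooddef]
    omega
  obtain ⟨A, hAsub, hAcard⟩ := Finset.exists_subset_card_eq hgoodcard
  refine ⟨A, B, hAcard, hBcard, ?_⟩
  intro x hxA y hyB
  have hx := hAsub hxA
  rw [hgooddef, Finset.mem_sdiff] at hx
  obtain ⟨hxE, hxnb⟩ := hx
  rw [bipCompl, Finset.mem_sdiff]
  refine ⟨Finset.mem_univ _, fun hxy => ?_⟩
  exact hxnb (Finset.mem_filter.2 ⟨hxE, y, hyB, hxy⟩)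
end
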